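/- Let m ∈ ℕ, let A and B be m×m complex matrices, and define Θ(t) = exp(−tA)·B·exp(tA) using the matrix exponential. Let T > 0 and let u, w : [0,T] → ℝ be piecewise constant functions. Then for every t ∈ [0,T], ‖∫_0^t u(s)Θ(s) ds − ∫_0^t w(s)Θ(s) ds‖ ≤ |∫_0^t (u(τ) − w(τ)) dτ| · ‖Θ(t)‖ + ∫_0^t |∫_0^s (u(τ) − w(τ)) dτ| · ‖exp(−sA)·(BA − AB)·exp(sA)‖ ds, where ‖·‖ denotes the operator norm on m×m complex matrices. -/

import Mathlib

open scoped Matrix.Norms.L2Operator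
open MeasureTheory intervalIntegral Set Topology NormedSpace

/-- A function `f` is piecewise constant on `[0,T]` if there is a finite partition
`0 = t_0 < t_1 < … < t_m = T` such that `f` is constant on each interval `[t_{j-1}, t_j)`. -/
def PiecewiseConstOn (f : ℝ → ℝ) (T : ℝ) : Prop :=
  ∃ (m : ℕ) (t : ℕ → ℝ), 0 < m ∧ t 0 = 0 ∧ t m = T ∧
    (∀ j < m, t j < t (j + 1)) ∧
    ∀ j < m, ∀ x ∈ Set.Ico (t j) (t (j + 1)), f x = f (t j)

/-!
Put `v = u - w` and `V s = ∫₀ˢ v`. Since `Θ' s = exp(-sA) (BA - AB) exp(sA)`, integration by parts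
gives `∫₀ᵗ v Θ = V t • Θ t - ∫₀ᵗ V Θ'`, and the estimate is the triangle inequality. Integration
by parts only needs `V` to have right derivative `v` on `(0, t)`, which holds because piecewise
constant functions are right-continuous.
-/

theorem exists_lt_mem_Ico_of_mem_Ico {α : Type*} [LinearOrder α] {t : ℕ → α} {x : α} :
    ∀ {n : ℕ}, x ∈ Ico (t 0) (t n) → ∃ j < n, x ∈ Ico (t j) (t (j + 1))
  | 0, hx => absurd hx.2 (not_lt.2 hx.1)
  | n + 1, hx => by
    rcases lt_or_ge x (t n) with hxn | hxn
    · obtain ⟨j, hj, hxj⟩ := exists_lt_mem_Ico_of_mem_Ico ⟨hx.1, hxn⟩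
      exact ⟨j, hj.trans n.lt_succ_self, hxj⟩
    · exact ⟨n, n.lt_succ_self, hxn, hx.2⟩

namespace PiecewiseConstOn

variable {f : ℝ → ℝ} {T : ℝ}

theorem eventuallyEq_nhdsGE (hf : PiecewiseConstOn f T) {x : ℝ} (hx : x ∈ Ico 0 T) :
    f =ᶠ[𝓝[≥] x] fun _ => f x := by
  obtain ⟨n, t, -, h0, hT, -, hconst⟩ := hf
  obtain ⟨j, hj, hxj⟩ := exists_lt_mem_Ico_of_mem_Ico (t := t) (n := n) (by rwa [h0, hT])
  filter_upwards [Ico_mem_nhdsGE hxj.2] with y hy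
  rw [hconst j hj y ⟨hxj.1.trans hy.1, hy.2⟩, hconst j hj x hxj]

theorem continuousWithinAt_Ioi (hf : PiecewiseConstOn f T) {x : ℝ} (hx : x ∈ Ico 0 T) :
    ContinuousWithinAt f (Ioi x) x :=
  (continuousWithinAt_const.congr_of_eventuallyEq (hf.eventuallyEq_nhdsGE hx) rfl).mono
    Ioi_subset_Ici_self

theorem integrableOn_Icc (hf : PiecewiseConstOn f T) : IntegrableOn f (Icc 0 T) := by
  obtain ⟨n, t, -, h0, hT, -, hconst⟩ := hf
  rw [integrableOn_Icc_iff_integrableOn_Ico]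
  have hcover : Ico 0 T ⊆ ⋃ j ∈ Finset.range n, Ico (t j) (t (j + 1)) := fun x hx => by
    obtain ⟨j, hj, hxj⟩ := exists_lt_mem_Ico_of_mem_Ico (t := t) (n := n) (by rwa [h0, hT])
    exact mem_biUnion (Finset.mem_range.2 hj) hxj
  refine ((integrableOn_finset_iUnion).2 fun j hj => ?_).mono_set hcover
  exact (integrableOn_const (C := f (t j)) (by simp)).congr_fun
    (fun x hx => (hconst j (Finset.mem_range.1 hj) x hx).symm) measurableSet_Ico

theorem intervalIntegrable (hf : PiecewiseConstOn f T) {t : ℝ} (ht : t ∈ Icc 0 T) :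
    IntervalIntegrable f volume 0 t :=
  (hf.integrableOn_Icc.mono_set (uIcc_subset_Icc ⟨le_rfl, ht.1.trans ht.2⟩ ht)).intervalIntegrable

end PiecewiseConstOn

section IntegrationByParts

variable {E : Type*} [NormedAddCommGroup E] [NormedSpace ℝ E] [CompleteSpace E]
  {v : ℝ → ℝ} {Θ Θ' : ℝ → E} {t : ℝ}

theorem hasDerivWithinAt_Ioi_primitive (hv : IntervalIntegrable v volume 0 t) {x : ℝ}
    (hx : x ∈ Ioo 0 t) (hvx : ContinuousWithinAt v (Ioi x) x) :
    HasDerivWithinAt (fun s => ∫ τ in 0..s, v τ) (v x) (Ioi x) x := by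
  have hmeas : StronglyMeasurableAtFilter v (𝓝[>] x) :=
    ⟨Ioo x t, Ioo_mem_nhdsGT hx.2,
      (hv.1.mono_set (Ioo_subset_Ioc_self.trans (Ioc_subset_Ioc_left hx.1.le))).1⟩
  have hv_x : IntervalIntegrable v volume 0 x := hv.mono_set <| by
    rw [uIcc_of_le hx.1.le, uIcc_of_le (hx.1.trans hx.2).le]
    exact Icc_subset_Icc_right hx.2.le
  exact (integral_hasDerivWithinAt_right hv_x (s := Ici x) hmeas hvx).mono Ioi_subset_Ici_self

theorem integral_smul_eq_primitive_smul_sub (ht : 0 ≤ t) (hv : IntervalIntegrable v volume 0 t)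
    (hv_right : ∀ x ∈ Ioo 0 t, ContinuousWithinAt v (Ioi x) x)
    (hΘ : ∀ s ∈ Icc 0 t, HasDerivAt Θ (Θ' s) s) (hΘ' : ContinuousOn Θ' (Icc 0 t)) :
    ∫ s in 0..t, v s • Θ s =
      (∫ τ in 0..t, v τ) • Θ t - ∫ s in 0..t, (∫ τ in 0..s, v τ) • Θ' s := by
  have hIoo : Ioo (min 0 t) (max 0 t) = Ioo 0 t := by rw [min_eq_left ht, max_eq_right ht]
  have hparts := integral_smul_deriv_eq_deriv_smul_of_hasDeriv_right
    (u := fun s => ∫ τ in 0..s, v τ) (continuousOn_primitive_interval' hv left_mem_uIcc)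
    (fun s hs => (hΘ s (by rwa [uIcc_of_le ht] at hs)).continuousAt.continuousWithinAt)
    (fun x hx => hasDerivWithinAt_Ioi_primitive hv (hIoo ▸ hx) (hv_right x (hIoo ▸ hx)))
    (fun x hx => (hΘ x (Ioo_subset_Icc_self (hIoo ▸ hx))).hasDerivWithinAt) hv
    ((uIcc_of_le ht).symm ▸ hΘ').intervalIntegrable
  rw [hparts, integral_same, zero_smul, sub_zero, sub_sub_cancel]

theorem norm_integral_smul_le (ht : 0 ≤ t) (hv : IntervalIntegrable v volume 0 t)
    (hv_right : ∀ x ∈ Ioo 0 t, ContinuousWithinAt v (Ioi x) x)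
    (hΘ : ∀ s ∈ Icc 0 t, HasDerivAt Θ (Θ' s) s) (hΘ' : ContinuousOn Θ' (Icc 0 t)) :
    ‖∫ s in 0..t, v s • Θ s‖ ≤
      |∫ τ in 0..t, v τ| * ‖Θ t‖ + ∫ s in 0..t, |∫ τ in 0..s, v τ| * ‖Θ' s‖ := by
  rw [integral_smul_eq_primitive_smul_sub ht hv hv_right hΘ hΘ']
  refine (norm_sub_le _ _).trans (add_le_add (by rw [norm_smul, Real.norm_eq_abs]) ?_)
  refine (intervalIntegral.norm_integral_le_integral_norm ht).trans_eq ?_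
  simp only [norm_smul, Real.norm_eq_abs]

end IntegrationByParts

theorem hasDerivAt_exp_neg_smul_mul_mul_exp_smul {𝔸 : Type*} [NormedRing 𝔸] [NormedAlgebra ℝ 𝔸]
    [CompleteSpace 𝔸] (A B : 𝔸) (s : ℝ) :
    HasDerivAt (fun u : ℝ => exp ((-u) • A) * B * exp (u • A))
      (exp ((-s) • A) * (B * A - A * B) * exp (s • A)) s := by
  have h_exp := hasDerivAt_exp_smul_const A s
  have h_exp_neg : HasDerivAt (fun u : ℝ => exp ((-u) • A)) (exp ((-s) • A) * (-A)) s := by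
    simpa only [neg_smul, smul_neg] using hasDerivAt_exp_smul_const (-A) s
  have hcomm : exp (s • A) * A = A * exp (s • A) :=
    (((Commute.refl A).smul_left s).exp_left).eq
  refine ((h_exp_neg.mul_const B).mul h_exp).congr_deriv ?_
  rw [hcomm]
  noncomm_ring

theorem integral_control_matrix_estimate_general
    (m : ℕ) (A B : Matrix (Fin m) (Fin m) ℂ)
    (Θ : ℝ → Matrix (Fin m) (Fin m) ℂ)
    (hΘ : ∀ t : ℝ, Θ t = NormedSpace.exp ((-t) • A) * B * NormedSpace.exp (t • A))
    (T : ℝ)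
    (u w : ℝ → ℝ) (hu : PiecewiseConstOn u T) (hw : PiecewiseConstOn w T) :
    ∀ t ∈ Set.Icc (0 : ℝ) T,
      ‖(∫ s in (0 : ℝ)..t, u s • Θ s) - ∫ s in (0 : ℝ)..t, w s • Θ s‖ ≤
        |∫ τ in (0 : ℝ)..t, (u τ - w τ)| * ‖Θ t‖ +
        ∫ s in (0 : ℝ)..t,
          |∫ τ in (0 : ℝ)..s, (u τ - w τ)| *
            ‖NormedSpace.exp ((-s) • A) * (B * A - A * B) * NormedSpace.exp (s • A)‖ := by
  obtain rfl : Θ = fun s => exp ((-s) • A) * B * exp (s • A) := funext hΘ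
  intro t ht
  have hΘ_cont : Continuous fun s : ℝ => exp ((-s) • A) * B * exp (s • A) :=
    continuous_iff_continuousAt.2 fun s =>
      (hasDerivAt_exp_neg_smul_mul_mul_exp_smul A B s).continuousAt
  have hΘ'_cont : Continuous fun s : ℝ => exp ((-s) • A) * (B * A - A * B) * exp (s • A) :=
    continuous_iff_continuousAt.2 fun s =>
      (hasDerivAt_exp_neg_smul_mul_mul_exp_smul A (B * A - A * B) s).continuousAt
  have hu_int := hu.intervalIntegrable ht
  have hw_int := hw.intervalIntegrable ht
  rw [← integral_sub (hu_int.smul_continuousOn hΘ_cont.continuousOn)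
    (hw_int.smul_continuousOn hΘ_cont.continuousOn)]
  simp only [← sub_smul]
  refine norm_integral_smul_le ht.1 (hu_int.sub hw_int) (fun x hx => ?_)
    (fun s _ => hasDerivAt_exp_neg_smul_mul_mul_exp_smul A B s) hΘ'_cont.continuousOn
  have hx' : x ∈ Ico 0 T := ⟨hx.1.le, hx.2.trans_le ht.2⟩
  exact (hu.continuousWithinAt_Ioi hx').sub (hw.continuousWithinAt_Ioi hx')

/-- integration by parts estimate for `∫ (u - w) Θ`,
where `Θ(t) = exp(-tA) B exp(tA)` and `‖·‖` is the operator norm on matrices. -/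
theorem integral_control_matrix_estimate
    (m : ℕ) (A B : Matrix (Fin m) (Fin m) ℂ)
    (Θ : ℝ → Matrix (Fin m) (Fin m) ℂ)
    (hΘ : ∀ t : ℝ, Θ t = NormedSpace.exp ((-t) • A) * B * NormedSpace.exp (t • A))
    (T : ℝ) (hT : 0 < T)
    (u w : ℝ → ℝ) (hu : PiecewiseConstOn u T) (hw : PiecewiseConstOn w T) :
    ∀ t ∈ Set.Icc (0 : ℝ) T,
      ‖(∫ s in (0 : ℝ)..t, u s • Θ s) - ∫ s in (0 : ℝ)..t, w s • Θ s‖ ≤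
        |∫ τ in (0 : ℝ)..t, (u τ - w τ)| * ‖Θ t‖ +
        ∫ s in (0 : ℝ)..t,
          |∫ τ in (0 : ℝ)..s, (u τ - w τ)| *
            ‖NormedSpace.exp ((-s) • A) * (B * A - A * B) * NormedSpace.exp (s • A)‖ :=
  integral_control_matrix_estimate_general m A B Θ hΘ T u w hu hw
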